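/- arXiv:1501.06678 — 3 statements merged into one kernel-verified Lean document; each statement's English description precedes it below -/
import Mathlib

section
/- For a quasi-strongly connected directed graph G = G_T ∪ G_C with L edges and N nodes, the edge Laplacian L_e = E^T E_⊙^w has exactly L − N + 1 zero eigenvalues (counting algebraic multiplicity), and its N − 1 nonzero eigenvalues all lie in the open right-half complex plane. -/
open Matrix Polynomial

lemma myEval_charpoly {n : Type*} [Fintype n] [DecidableEq n] {R : Type*} [CommRing R]
    (M : Matrix n n R) (x : R) :
    M.charpoly.eval x = det (x • (1 : Matrix n n R) - M) := by
  rw [Matrix.charpoly, ← Polynomial.coe_evalRingHom, RingHom.map_det]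
  congr 1
  ext i j
  by_cases h : i = j <;> simp [h, charmatrix_apply, Matrix.one_apply, Matrix.diagonal_apply]

lemma charpoly_swap {N L : ℕ} (A : Matrix (Fin N) (Fin L) ℂ) (B : Matrix (Fin L) (Fin N) ℂ) :
    X ^ N * (B * A).charpoly = X ^ L * (A * B).charpoly := by
  apply Polynomial.eq_of_infinite_eval_eq
  apply Set.Infinite.mono (s := {x : ℂ | x ≠ 0})
  · intro x hx
    simp only [Set.mem_setOf_eq, eval_mul, eval_pow, eval_X]
    rw [myEval_charpoly, myEval_charpoly]
    have h1 : x • (1 : Matrix (Fin L) (Fin L) ℂ) - B * A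
        = x • ((1 : Matrix (Fin L) (Fin L) ℂ) + B * (-(x⁻¹ • A))) := by
      simp only [Matrix.mul_neg, Matrix.neg_mul, Matrix.mul_smul, Matrix.smul_mul,
        smul_neg, smul_smul, mul_inv_cancel₀ hx, one_smul, smul_add, sub_eq_add_neg]
    have h2 : x • (1 : Matrix (Fin N) (Fin N) ℂ) - A * B
        = x • ((1 : Matrix (Fin N) (Fin N) ℂ) + (-(x⁻¹ • A)) * B) := by
      simp only [Matrix.mul_neg, Matrix.neg_mul, Matrix.mul_smul, Matrix.smul_mul,
        smul_neg, smul_smul, mul_inv_cancel₀ hx, one_smul, smul_add, sub_eq_add_neg]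
    rw [h1, h2, Matrix.det_smul, Matrix.det_smul, Matrix.det_one_add_mul_comm]
    simp only [Fintype.card_fin]
    ring
  · have : ({x : ℂ | x ≠ 0}) = (Set.univ \ {0}) := by ext; simp
    rw [this]
    exact Set.Infinite.diff Set.infinite_univ (Set.finite_singleton 0)


lemma conv_eq {ι : Type*} (s : Finset ι) (c : ι → ℝ) (hc : ∀ t ∈ s, 0 ≤ c t)
    (z : ι → ℂ) (z₀ : ℂ) (hz : ∀ t ∈ s, ‖z t‖ ≤ ‖z₀‖)
    (heq : ∑ t ∈ s, (c t : ℂ) * z t = ((∑ t ∈ s, c t : ℝ) : ℂ) * z₀) :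
    ∀ t ∈ s, c t ≠ 0 → z t = z₀ := by
  have hre : ∑ t ∈ s, c t * ((starRingEnd ℂ) z₀ * z t).re
      = (∑ t ∈ s, c t) * Complex.normSq z₀ := by
    have h := congrArg (fun u => ((starRingEnd ℂ) z₀ * u).re) heq
    simp only [Finset.mul_sum, Complex.re_sum] at h
    calc ∑ t ∈ s, c t * ((starRingEnd ℂ) z₀ * z t).re
        = ∑ t ∈ s, ((starRingEnd ℂ) z₀ * ((c t : ℂ) * z t)).re := by
          refine Finset.sum_congr rfl fun t _ => ?_
          rw [show (starRingEnd ℂ) z₀ * ((c t : ℂ) * z t)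
            = (c t : ℂ) * ((starRingEnd ℂ) z₀ * z t) by ring]
          rw [Complex.re_ofReal_mul]
      _ = ((starRingEnd ℂ) z₀ * (((∑ t ∈ s, c t : ℝ) : ℂ) * z₀)).re := by
          rw [← h]
      _ = (∑ t ∈ s, c t) * Complex.normSq z₀ := by
          rw [show (starRingEnd ℂ) z₀ * (((∑ t ∈ s, c t : ℝ) : ℂ) * z₀)
            = ((∑ t ∈ s, c t : ℝ) : ℂ) * ((starRingEnd ℂ) z₀ * z₀) by ring]
          rw [Complex.re_ofReal_mul]
          congr 1
          rw [mul_comm, Complex.mul_conj, Complex.ofReal_re]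
  have hterm : ∀ t ∈ s, ((starRingEnd ℂ) z₀ * z t).re ≤ Complex.normSq z₀ := by
    intro t ht
    calc ((starRingEnd ℂ) z₀ * z t).re ≤ ‖(starRingEnd ℂ) z₀ * z t‖ :=
          Complex.re_le_norm _
      _ = ‖z₀‖ * ‖z t‖ := by rw [norm_mul, Complex.norm_conj]
      _ ≤ ‖z₀‖ * ‖z₀‖ :=
          mul_le_mul_of_nonneg_left (hz t ht) (norm_nonneg _)
      _ = Complex.normSq z₀ := by rw [← Complex.sq_norm, sq]
  have hzero : ∀ t ∈ s, c t * (Complex.normSq z₀ - ((starRingEnd ℂ) z₀ * z t).re) = 0 := by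
    have hsum0 : ∑ t ∈ s, c t * (Complex.normSq z₀ - ((starRingEnd ℂ) z₀ * z t).re) = 0 := by
      simp only [mul_sub, Finset.sum_sub_distrib, hre, ← Finset.sum_mul]
      ring
    have := (Finset.sum_eq_zero_iff_of_nonneg (fun t ht => by
      have := hc t ht; have := hterm t ht; nlinarith)).mp hsum0
    exact this
  intro t ht hct
  have h1 : Complex.normSq z₀ = ((starRingEnd ℂ) z₀ * z t).re := by
    have := hzero t ht
    have hc' := hc t ht
    have : Complex.normSq z₀ - ((starRingEnd ℂ) z₀ * z t).re = 0 := by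
      rcases mul_eq_zero.mp this with h | h
      · exact absurd h hct
      · exact h
    linarith
  by_cases hz₀ : z₀ = 0
  · have := hz t ht
    rw [hz₀] at this ⊢
    simpa using (norm_eq_zero.mp (le_antisymm (by simpa using this)
      (norm_nonneg _)))
  · set ζ := (starRingEnd ℂ) z₀ * z t with hζ
    have habs : ‖ζ‖ ≤ Complex.normSq z₀ := by
      rw [hζ, norm_mul, Complex.norm_conj, ← Complex.sq_norm, sq]
      exact mul_le_mul_of_nonneg_left (hz t ht) (norm_nonneg _)
    have him : ζ.im = 0 := by
      have h2 : ζ.re = Complex.normSq z₀ := h1.symm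
      have h3 : ζ.re ^ 2 + ζ.im ^ 2 = (‖ζ‖) ^ 2 := by
        rw [Complex.sq_norm, Complex.normSq_apply]; ring
      nlinarith [norm_nonneg ζ, Complex.normSq_nonneg z₀]
    have hζval : ζ = ((Complex.normSq z₀ : ℝ) : ℂ) := by
      apply Complex.ext
      · rw [← h1]; simp
      · simp [him]
    have : (starRingEnd ℂ) z₀ * z t = (starRingEnd ℂ) z₀ * z₀ := by
      rw [← hζ, hζval, mul_comm ((starRingEnd ℂ) z₀) z₀, Complex.mul_conj]
    exact mul_left_cancel₀ (by simpa using hz₀) this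


lemma row_nonneg {m : ℕ} (M : Matrix (Fin (m+1)) (Fin (m+1)) ℝ)
    (hoff : ∀ i j, i ≠ j → M i j ≤ 0) (hrow : ∀ i, ∑ j, M i j = 0)
    (u : Fin (m+1) → ℝ) (t : ℝ) (h : ∀ i, ∑ j, M i j * u j = t) : 0 ≤ t := by
  obtain ⟨i, -, hi⟩ := Finset.exists_max_image Finset.univ u Finset.univ_nonempty
  have hle : ∑ j, M i j * u i ≤ ∑ j, M i j * u j := by
    refine Finset.sum_le_sum fun j _ => ?_
    rcases eq_or_ne j i with rfl | hj
    · exact le_rfl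
    · have h1 := hoff i j (Ne.symm hj)
      have h2 := hi j (Finset.mem_univ j)
      nlinarith
  have hz : ∑ j, M i j * u i = 0 := by
    rw [← Finset.sum_mul, hrow, zero_mul]
  rw [hz, h i] at hle
  exact hle


lemma charpoly_last_col_zero {m : ℕ} {F : Type*} [Field F]
    (A : Matrix (Fin (m+1)) (Fin (m+1)) F) (h : ∀ i, A i (Fin.last m) = 0) :
    A.charpoly = X * (A.submatrix Fin.castSucc Fin.castSucc).charpoly := by
  have hsub : (charmatrix A).submatrix Fin.castSucc Fin.castSucc
      = charmatrix (A.submatrix Fin.castSucc Fin.castSucc) := by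
    ext i j
    simp only [Matrix.submatrix_apply, charmatrix_apply, Matrix.sub_apply,
      Matrix.diagonal_apply, Fin.castSucc_inj]
  rw [Matrix.charpoly, Matrix.det_succ_column (charmatrix A) (Fin.last m)]
  rw [Finset.sum_eq_single (Fin.last m)]
  · rw [show ((charmatrix A) (Fin.last m) (Fin.last m)) = X by
      rw [charmatrix_apply_eq, h (Fin.last m), map_zero, sub_zero]]
    rw [Fin.succAbove_last, hsub]
    have : ((-1 : F[X])) ^ ((Fin.last m : ℕ) + (Fin.last m : ℕ)) = 1 :=
      Even.neg_one_pow ⟨(Fin.last m : ℕ), rfl⟩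
    rw [this, one_mul, Matrix.charpoly]
  · intro i _ hi
    rw [charmatrix_apply_ne _ _ _ hi, h i, map_zero, neg_zero, mul_zero, zero_mul]
  · intro hmem
    exact absurd (Finset.mem_univ _) hmem

section Key

variable {m : ℕ} (M : Matrix (Fin (m+1)) (Fin (m+1)) ℝ)

local notation "φ" => algebraMap ℝ ℂ

lemma K1 (hoff : ∀ i j, i ≠ j → M i j ≤ 0) (hrow : ∀ i, ∑ j, M i j = 0)
    (v : Fin (m+1) → ℂ) (c : ℂ) (h : ∀ i, ∑ j, ((M i j : ℝ) : ℂ) * v j = c) : c = 0 := by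
  have hre : ∀ (u : Fin (m+1) → ℂ) (d : ℂ), (∀ i, ∑ j, ((M i j : ℝ) : ℂ) * u j = d)
      → 0 ≤ d.re := by
    intro u d hu
    refine row_nonneg M hoff hrow (fun j => (u j).re) d.re fun i => ?_
    have h2 := congrArg Complex.re (hu i)
    rw [Complex.re_sum] at h2
    rw [← h2]
    exact Finset.sum_congr rfl fun j _ => by rw [Complex.re_ofReal_mul]
  have hmul : ∀ (a : ℂ), 0 ≤ (a * c).re := by
    intro a
    refine hre (fun j => a * v j) (a * c) fun i => ?_
    rw [← h i, Finset.mul_sum]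
    exact Finset.sum_congr rfl fun j _ => by ring
  have h1 := hmul 1
  have h2 := hmul (-1)
  have h3 := hmul (-Complex.I)
  have h4 := hmul Complex.I
  simp only [one_mul, neg_one_mul, Complex.neg_re, Complex.mul_re, Complex.I_re,
    Complex.I_im, Complex.neg_im] at h1 h2 h3 h4
  apply Complex.ext <;> simp <;> nlinarith

lemma K2 (hoff : ∀ i j, i ≠ j → M i j ≤ 0) (hrow : ∀ i, ∑ j, M i j = 0)
    (hconn : ∀ i, Relation.ReflTransGen (fun a b => M b a ≠ 0 ∧ b ≠ a) (Fin.last m) i)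
    (v : Fin (m+1) → ℂ) (h : ∀ i, ∑ j, ((M i j : ℝ) : ℂ) * v j = 0) :
    ∀ i, v i = v (Fin.last m) := by
  set u : Fin (m+1) → ℂ := fun i => v i - v (Fin.last m) with hu_def
  have hrowC : ∀ i, ∑ j, ((M i j : ℝ) : ℂ) = 0 := by
    intro i
    have := congrArg (fun x : ℝ => (x : ℂ)) (hrow i)
    push_cast at this
    exact this
  have hu : ∀ i, ∑ j, ((M i j : ℝ) : ℂ) * u j = 0 := by
    intro i
    have : ∑ j, ((M i j : ℝ) : ℂ) * u j
        = (∑ j, ((M i j : ℝ) : ℂ) * v j) - (∑ j, ((M i j : ℝ) : ℂ)) * v (Fin.last m) := by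
      rw [Finset.sum_mul, ← Finset.sum_sub_distrib]
      exact Finset.sum_congr rfl fun j _ => by simp [hu_def]; ring
    rw [this, h i, hrowC i, zero_mul, sub_zero]
  obtain ⟨i₀, -, hmax⟩ := Finset.exists_max_image Finset.univ (fun i => ‖u i‖)
    Finset.univ_nonempty
  by_cases h0 : ‖u i₀‖ = 0
  · intro i
    have hle := hmax i (Finset.mem_univ i)
    have : ‖u i‖ = 0 := le_antisymm (by simpa [h0] using hle) (norm_nonneg _)
    have := norm_eq_zero.mp this
    rw [hu_def] at this
    exact sub_eq_zero.mp this
  · exfalso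
    have claim : ∀ j, Relation.ReflTransGen (fun a b => M b a ≠ 0 ∧ b ≠ a) (Fin.last m) j →
        (u j = u i₀ → u (Fin.last m) = u i₀) := by
      intro j hreach
      induction hreach with
      | refl => exact fun hj => hj
      | @tail b c hrb hbc ih =>
        intro hc
        have hb : u b = u c := by
          have hcoef : ∀ t ∈ Finset.univ.erase c, 0 ≤ -M c t := by
            intro t ht
            have htne := (Finset.mem_erase.mp ht).1
            have := hoff c t (Ne.symm htne)
            linarith
          have hz : ∀ t ∈ Finset.univ.erase c, ‖u t‖ ≤ ‖u c‖ := by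
            intro t _
            rw [hc]
            exact hmax t (Finset.mem_univ t)
          have hrowc := hu c
          have hsplit : ∑ t ∈ Finset.univ.erase c, ((M c t : ℝ) : ℂ) * u t
              = -(((M c c : ℝ) : ℂ) * u c) := by
            have := Finset.sum_erase_add Finset.univ
              (fun t => ((M c t : ℝ) : ℂ) * u t) (Finset.mem_univ c)
            rw [hrowc] at this
            linear_combination this
          have hcsum : ∑ t ∈ Finset.univ.erase c, -M c t = M c c := by
            have := Finset.sum_erase_add Finset.univ (fun t => M c t) (Finset.mem_univ c)
            rw [hrow c] at this
            have h2 : ∑ t ∈ Finset.univ.erase c, M c t = - M c c := by linarith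
            rw [Finset.sum_neg_distrib, h2, neg_neg]
          have heq : ∑ t ∈ Finset.univ.erase c, ((-M c t : ℝ) : ℂ) * u t
              = ((∑ t ∈ Finset.univ.erase c, -M c t : ℝ) : ℂ) * u c := by
            rw [hcsum]
            push_cast
            rw [show ∑ t ∈ Finset.univ.erase c, -((M c t : ℝ) : ℂ) * u t
              = -∑ t ∈ Finset.univ.erase c, ((M c t : ℝ) : ℂ) * u t by
                rw [← Finset.sum_neg_distrib]; exact Finset.sum_congr rfl fun t _ => by ring]
            rw [hsplit, neg_neg]
          have hmem : b ∈ Finset.univ.erase c :=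
            Finset.mem_erase.mpr ⟨Ne.symm hbc.2, Finset.mem_univ b⟩
          have := conv_eq (Finset.univ.erase c) (fun t => -M c t) hcoef u (u c) hz
            (by exact_mod_cast heq) b hmem (by simpa using hbc.1)
          exact this
        exact ih (hb.trans hc)
    have hlast := claim i₀ (hconn i₀) rfl
    have : u (Fin.last m) = 0 := by simp [hu_def]
    rw [this] at hlast
    exact h0 (by rw [← hlast]; simp)

lemma K3 (hdiag : ∀ i, 0 ≤ M i i) (hoff : ∀ i j, i ≠ j → M i j ≤ 0)
    (hrow : ∀ i, ∑ j, M i j = 0) :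
    ∀ μ : ℂ, (M.map (algebraMap ℝ ℂ)).charpoly.IsRoot μ → μ ≠ 0 → 0 < μ.re := by
  intro μ hroot hμ
  have hdet : det (μ • (1 : Matrix (Fin (m+1)) (Fin (m+1)) ℂ) - M.map (algebraMap ℝ ℂ)) = 0 := by
    rw [← myEval_charpoly]
    exact hroot
  obtain ⟨v, hv, hmv⟩ := (Matrix.exists_mulVec_eq_zero_iff).mpr hdet
  have hMv : (M.map (algebraMap ℝ ℂ)).mulVec v = μ • v := by
    have h1 : (μ • (1 : Matrix (Fin (m+1)) (Fin (m+1)) ℂ)).mulVec v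
        - (M.map (algebraMap ℝ ℂ)).mulVec v = 0 := by
      rw [← Matrix.sub_mulVec]
      exact hmv
    have h2 : (μ • (1 : Matrix (Fin (m+1)) (Fin (m+1)) ℂ)).mulVec v = μ • v := by
      rw [Matrix.smul_mulVec, Matrix.one_mulVec]
    rw [h2] at h1
    exact (sub_eq_zero.mp h1).symm
  have heq : ∀ i, ∑ j, ((M i j : ℝ) : ℂ) * v j = μ * v i := by
    intro i
    have := congrFun hMv i
    simpa [Matrix.mulVec, dotProduct, Matrix.map_apply] using this
  obtain ⟨i, -, hmax⟩ := Finset.exists_max_image Finset.univ (fun i => ‖v i‖)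
    Finset.univ_nonempty
  have hvi : 0 < ‖v i‖ := by
    rcases (norm_nonneg (v i)).lt_or_eq with h | h
    · exact h
    · exfalso
      apply hv
      funext j
      have := hmax j (Finset.mem_univ j)
      rw [← h] at this
      exact norm_eq_zero.mp (le_antisymm this (norm_nonneg _))
  have hsplit : (μ - ((M i i : ℝ) : ℂ)) * v i = ∑ j ∈ Finset.univ.erase i, ((M i j : ℝ) : ℂ) * v j := by
    have := Finset.sum_erase_add Finset.univ (fun j => ((M i j : ℝ) : ℂ) * v j) (Finset.mem_univ i)
    rw [heq i] at this
    linear_combination -this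
  have habs : ‖μ - ((M i i : ℝ) : ℂ)‖ * ‖v i‖ ≤ M i i * ‖v i‖ := by
    calc ‖μ - ((M i i : ℝ) : ℂ)‖ * ‖v i‖
        = ‖(μ - ((M i i : ℝ) : ℂ)) * v i‖ := (norm_mul _ _).symm
      _ = ‖∑ j ∈ Finset.univ.erase i, ((M i j : ℝ) : ℂ) * v j‖ := by rw [hsplit]
      _ ≤ ∑ j ∈ Finset.univ.erase i, ‖((M i j : ℝ) : ℂ) * v j‖ :=
          norm_sum_le _ _
      _ ≤ ∑ j ∈ Finset.univ.erase i, (-M i j) * ‖v i‖ := by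
          refine Finset.sum_le_sum fun j hj => ?_
          have hji := (Finset.mem_erase.mp hj).1
          rw [norm_mul, Complex.norm_real, Real.norm_eq_abs,
            abs_of_nonpos (hoff i j (Ne.symm hji))]
          exact mul_le_mul_of_nonneg_left (hmax j (Finset.mem_univ j))
            (by have := hoff i j (Ne.symm hji); linarith)
      _ = M i i * ‖v i‖ := by
          rw [← Finset.sum_mul]
          congr 1
          have := Finset.sum_erase_add Finset.univ (fun j => M i j) (Finset.mem_univ i)
          rw [hrow i] at this
          rw [Finset.sum_neg_distrib]
          linarith
  have h1 : ‖μ - ((M i i : ℝ) : ℂ)‖ ≤ M i i :=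
    le_of_mul_le_mul_right habs hvi
  have h2 : (μ.re - M i i) ^ 2 + μ.im ^ 2 ≤ (M i i) ^ 2 := by
    have := Complex.sq_norm (μ - ((M i i : ℝ) : ℂ))
    have hsq : ‖μ - ((M i i : ℝ) : ℂ)‖ ^ 2 ≤ (M i i) ^ 2 := by
      have h0 := norm_nonneg (μ - ((M i i : ℝ) : ℂ))
      nlinarith
    rw [this, Complex.normSq_apply, Complex.sub_re, Complex.sub_im, Complex.ofReal_re,
      Complex.ofReal_im, sub_zero] at hsq
    nlinarith [hsq]
  by_contra hre
  push_neg at hre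
  have hd := hdiag i
  have h5 : μ.re ^ 2 ≤ 0 := by nlinarith [sq_nonneg μ.im]
  have h6 : μ.im ^ 2 ≤ 0 := by nlinarith [sq_nonneg μ.re]
  have hre0 : μ.re = 0 := pow_eq_zero_iff two_ne_zero |>.mp (le_antisymm h5 (sq_nonneg μ.re))
  have him0 : μ.im = 0 := pow_eq_zero_iff two_ne_zero |>.mp (le_antisymm h6 (sq_nonneg μ.im))
  exact hμ (Complex.ext (by simp [hre0]) (by simp [him0]))

lemma charpoly_sq_comm {n : ℕ} (A B : Matrix (Fin n) (Fin n) ℂ) :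
    (A * B).charpoly = (B * A).charpoly := by
  have h := charpoly_swap A B
  exact (mul_left_cancel₀ (pow_ne_zero n (Polynomial.X_ne_zero (R := ℂ))) h).symm

lemma K4 (hoff : ∀ i j, i ≠ j → M i j ≤ 0) (hrow : ∀ i, ∑ j, M i j = 0)
    (hconn : ∀ i, Relation.ReflTransGen (fun a b => M b a ≠ 0 ∧ b ≠ a) (Fin.last m) i) :
    (M.map (algebraMap ℝ ℂ)).charpoly.rootMultiplicity 0 = 1 := by
  set Mc := M.map (algebraMap ℝ ℂ) with hMc
  set P : Matrix (Fin (m+1)) (Fin (m+1)) ℂ :=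
    fun i j => if j = Fin.last m then 1 else if i = j then 1 else 0 with hP
  set Q : Matrix (Fin (m+1)) (Fin (m+1)) ℂ :=
    fun i j => if j = Fin.last m then (if i = Fin.last m then 1 else -1)
      else if i = j then 1 else 0 with hQ
  have hPlast : ∀ k, P k (Fin.last m) = 1 := fun k => by simp [hP]
  have hPsum : ∀ (x : Fin (m+1) → ℂ), x (Fin.last m) = 0 → ∀ i, ∑ j, P i j * x j = x i := by
    intro x hx i
    have : ∀ j, P i j * x j = (if i = j then 1 else 0) * x j := by
      intro j
      by_cases hj : j = Fin.last m
      · subst hj; rw [hx, mul_zero, mul_zero]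
      · simp [hP, hj]
    simp only [this, ite_mul, one_mul, zero_mul]
    exact (Finset.sum_ite_eq Finset.univ i x).trans (if_pos (Finset.mem_univ i))
  have hQP : Q * P = 1 := by
    ext i j
    rw [Matrix.mul_apply]
    by_cases hj : j = Fin.last m
    · subst hj
      simp only [hPlast, mul_one]
      by_cases hi : i = Fin.last m
      · subst hi
        have : ∀ k, Q (Fin.last m) k = if k = Fin.last m then (1:ℂ) else 0 := by
          intro k
          by_cases hk : k = Fin.last m
          · subst hk; simp [hQ]
          · simp [hQ, hk, Ne.symm hk]
        simp [this, Matrix.one_apply]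
      · have : ∀ k, Q i k = (if k = Fin.last m then (-1:ℂ) else 0) + (if i = k then 1 else 0) := by
          intro k
          by_cases hk : k = Fin.last m
          · subst hk
            simp [hQ, hi]
          · by_cases hik : i = k <;> simp [hQ, hk, hik]
        rw [Finset.sum_congr rfl fun k _ => this k, Finset.sum_add_distrib]
        simp [Matrix.one_apply, hi, Finset.sum_ite_eq]
    · have hPk : ∀ k, P k j = if k = j then 1 else 0 := by
        intro k
        simp [hP, hj]
      simp only [hPk, mul_ite, mul_one, mul_zero]
      rw [Finset.sum_ite_eq' Finset.univ j (fun k => Q i k)]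
      simp [Matrix.one_apply, hQ, hj]
  have hPQ : P * Q = 1 := mul_eq_one_comm.mp hQP
  set A := Q * Mc * P with hA
  have hcharA : A.charpoly = Mc.charpoly := by
    calc A.charpoly = (Q * (Mc * P)).charpoly := by rw [hA, Matrix.mul_assoc]
      _ = ((Mc * P) * Q).charpoly := charpoly_sq_comm _ _
      _ = Mc.charpoly := by rw [Matrix.mul_assoc, hPQ, Matrix.mul_one]
  have hrowC : ∀ i, ∑ k, Mc i k = 0 := by
    intro i
    have := congrArg (fun x : ℝ => (x : ℂ)) (hrow i)
    push_cast at this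
    simpa [hMc, Matrix.map_apply] using this
  have hcol : ∀ i, A i (Fin.last m) = 0 := by
    intro i
    rw [hA, Matrix.mul_apply]
    simp only [hPlast, mul_one]
    calc ∑ k, (Q * Mc) i k = ∑ k, ∑ t, Q i t * Mc t k := by
          refine Finset.sum_congr rfl fun k _ => ?_
          rw [Matrix.mul_apply]
      _ = ∑ t, Q i t * ∑ k, Mc t k := by
          rw [Finset.sum_comm]
          exact Finset.sum_congr rfl fun t _ => by rw [Finset.mul_sum]
      _ = 0 := by simp [hrowC]
  have hdetA' : ((A.submatrix Fin.castSucc Fin.castSucc)).det ≠ 0 := by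
    intro hdet
    obtain ⟨v, hv, hmv⟩ := Matrix.exists_mulVec_eq_zero_iff.mpr hdet
    classical
    set vt : Fin (m+1) → ℂ := Fin.snoc v 0 with hvt
    have hvtlast : vt (Fin.last m) = 0 := by simp [hvt]
    obtain ⟨c, hAv⟩ : ∃ c : ℂ, A.mulVec vt = fun i => if i = Fin.last m then c else 0 := by
      refine ⟨(A.mulVec vt) (Fin.last m), ?_⟩
      funext i
      refine Fin.lastCases ?_ (fun i' => ?_) i
      · simp
      · have hlt : (Fin.castSucc i') ≠ Fin.last m := (Fin.castSucc_lt_last i').ne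
        rw [if_neg hlt]
        calc (A.mulVec vt) (Fin.castSucc i') = ∑ j, A (Fin.castSucc i') j * vt j := rfl
          _ = (∑ j : Fin m, A (Fin.castSucc i') (Fin.castSucc j) * vt (Fin.castSucc j))
              + A (Fin.castSucc i') (Fin.last m) * vt (Fin.last m) :=
            Fin.sum_univ_castSucc _
          _ = ∑ j : Fin m, A (Fin.castSucc i') (Fin.castSucc j) * v j := by
            simp [hvt, Fin.snoc_castSucc, Fin.snoc_last]
          _ = 0 := by
            have := congrFun hmv i'
            simpa [Matrix.mulVec, dotProduct, Matrix.submatrix_apply] using this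
    have hMcvt : Mc.mulVec vt = fun _ => c := by
      have h1 : P * A = Mc * P := by
        rw [hA, ← Matrix.mul_assoc, ← Matrix.mul_assoc, hPQ, Matrix.one_mul]
      have hPvt : P.mulVec vt = vt := by
        funext i
        rw [Matrix.mulVec, dotProduct]
        exact hPsum vt hvtlast i
      have h2 : Mc.mulVec vt = P.mulVec (A.mulVec vt) := by
        rw [Matrix.mulVec_mulVec, h1, ← Matrix.mulVec_mulVec, hPvt]
      rw [h2, hAv]
      funext i
      rw [Matrix.mulVec, dotProduct]
      calc ∑ j, P i j * (if j = Fin.last m then c else 0)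
          = ∑ j, (if j = Fin.last m then P i j * c else 0) := by
            refine Finset.sum_congr rfl fun j _ => ?_
            by_cases hj : j = Fin.last m <;> simp [hj]
        _ = P i (Fin.last m) * c := (Finset.sum_ite_eq' Finset.univ (Fin.last m) _).trans
              (if_pos (Finset.mem_univ _))
        _ = c := by rw [hPlast, one_mul]
    have hMcrow : ∀ i, ∑ j, ((M i j : ℝ) : ℂ) * vt j = c := by
      intro i
      have := congrFun hMcvt i
      simpa [Matrix.mulVec, dotProduct, hMc, Matrix.map_apply] using this
    have hc0 : c = 0 := K1 M hoff hrow vt c hMcrow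
    have hker := K2 M hoff hrow hconn vt (fun i => by rw [hMcrow i, hc0])
    apply hv
    funext j
    have := hker (Fin.castSucc j)
    rw [hvtlast] at this
    simpa [hvt, Fin.snoc_castSucc] using this
  have hfact : Mc.charpoly = X * (A.submatrix Fin.castSucc Fin.castSucc).charpoly := by
    rw [← hcharA, charpoly_last_col_zero A hcol]
  rw [hfact, Polynomial.rootMultiplicity_mul
    (mul_ne_zero Polynomial.X_ne_zero (A.submatrix Fin.castSucc Fin.castSucc).charpoly_monic.ne_zero)]
  have hX : rootMultiplicity (0:ℂ) (X : ℂ[X]) = 1 := by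
    rw [show (X : ℂ[X]) = (X - C 0) ^ 1 by simp]
    exact Polynomial.rootMultiplicity_X_sub_C_pow 0 1
  have hq : rootMultiplicity (0:ℂ) (A.submatrix Fin.castSucc Fin.castSucc).charpoly = 0 := by
    apply Polynomial.rootMultiplicity_eq_zero
    intro hroot
    apply hdetA'
    rw [Matrix.det_eq_sign_charpoly_coeff, Polynomial.coeff_zero_eq_eval_zero]
    rw [hroot]
    ring
  rw [hX, hq]

end Key

/-- For a quasi-strongly connected weighted directed graph on `N` nodes with `L`
edges, the edge Laplacian `L_e = Eᵀ E⊙ʷ` has exactly `L − N + 1` zero eigenvalues (counting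
algebraic multiplicity), and all of its remaining (nonzero) eigenvalues lie in the open
right-half complex plane. -/
theorem edge_laplacian_spectrum
    (N L : ℕ) (tail head : Fin L → Fin N) (hloop : ∀ k, tail k ≠ head k)
    (w : Fin L → ℝ) (hw : ∀ k, 0 < w k)
    (hqsc : ∃ r : Fin N, ∀ i : Fin N,
      Relation.ReflTransGen (fun a b => ∃ k, tail k = a ∧ head k = b) r i)
    (E : Matrix (Fin N) (Fin L) ℝ)
    (hE : E = fun i k => (if i = tail k then (1 : ℝ) else 0) + (if i = head k then -1 else 0))
    (Eodot : Matrix (Fin N) (Fin L) ℝ)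
    (hEodot : Eodot = fun i k => if i = head k then (-1 : ℝ) else 0)
    (Ew : Matrix (Fin N) (Fin L) ℝ) (hEw : Ew = Eodot * Matrix.diagonal w) :
    (((E.transpose * Ew).map (algebraMap ℝ ℂ)).charpoly).rootMultiplicity 0 = L + 1 - N ∧
    (∀ μ : ℂ, (((E.transpose * Ew).map (algebraMap ℝ ℂ)).charpoly).IsRoot μ → μ ≠ 0 →
      0 < μ.re) := by
  obtain ⟨r, hr⟩ := hqsc
  obtain ⟨m, rfl⟩ := Nat.exists_eq_succ_of_ne_zero (Nat.pos_iff_ne_zero.mp r.pos)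
  -- the graph Laplacian
  set G : Matrix (Fin (m+1)) (Fin (m+1)) ℝ := Ew * E.transpose with hG
  have hGent : ∀ i j, G i j = ∑ k, ((if i = head k then (-w k) else 0) *
      ((if j = tail k then (1:ℝ) else 0) + (if j = head k then -1 else 0))) := by
    intro i j
    rw [hG, Matrix.mul_apply]
    refine Finset.sum_congr rfl fun k _ => ?_
    rw [Matrix.transpose_apply, hEw, Matrix.mul_diagonal, hEodot, hE]
    simp only [Matrix.of_apply]
    split_ifs <;> ring
  have hdiagG : ∀ i, 0 ≤ G i i := by
    intro i
    rw [hGent]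
    refine Finset.sum_nonneg fun k _ => ?_
    by_cases h : i = head k
    · have ht : i ≠ tail k := fun hh => hloop k (by rw [← hh, ← h])
      rw [if_pos h, if_neg ht, if_pos h]
      nlinarith [hw k]
    · simp [h]
  have hoffG : ∀ i j, i ≠ j → G i j ≤ 0 := by
    intro i j hij
    rw [hGent]
    refine Finset.sum_nonpos fun k _ => ?_
    by_cases h : i = head k
    · have hjh : j ≠ head k := fun hh => hij (h.trans hh.symm)
      simp only [if_neg hjh, add_zero, if_pos h]
      by_cases ht : j = tail k
      · simp [ht]
        exact (hw k).le
      · simp [ht]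
    · simp [h]
  have hrowG : ∀ i, ∑ j, G i j = 0 := by
    intro i
    have : ∑ j, G i j = ∑ k, ((if i = head k then (-w k) else 0) *
        (∑ j, ((if j = tail k then (1:ℝ) else 0) + (if j = head k then -1 else 0)))) := by
      simp only [hGent]
      rw [Finset.sum_comm]
      exact Finset.sum_congr rfl fun k _ => by rw [Finset.mul_sum]
    rw [this]
    refine Finset.sum_eq_zero fun k _ => ?_
    have hsum : ∑ j, ((if j = tail k then (1:ℝ) else 0) + (if j = head k then -1 else 0)) = 0 := by
      rw [Finset.sum_add_distrib]
      rw [(Finset.sum_ite_eq' Finset.univ (tail k) (fun _ => (1:ℝ))).trans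
        (if_pos (Finset.mem_univ _))]
      rw [(Finset.sum_ite_eq' Finset.univ (head k) (fun _ => (-1:ℝ))).trans
        (if_pos (Finset.mem_univ _))]
      ring
    rw [hsum, mul_zero]
  have hedge : ∀ k, G (head k) (tail k) < 0 := by
    intro k
    rw [hGent]
    have hterm : ∀ k' ∈ Finset.univ, ((if head k = head k' then (-w k') else 0) *
        ((if tail k = tail k' then (1:ℝ) else 0) + (if tail k = head k' then -1 else 0)))
        ≤ (fun _ => (0:ℝ)) k' := by
      intro k' _
      by_cases h : head k = head k'
      · have hht : tail k ≠ head k' := fun hh => hloop k (hh.trans h.symm)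
        simp only [if_pos h, if_neg hht, add_zero]
        by_cases ht : tail k = tail k'
        · simp [ht]
          exact (hw k').le
        · simp [ht]
      · simp [h]
    have hk : ((if head k = head k then (-w k) else 0) *
        ((if tail k = tail k then (1:ℝ) else 0) + (if tail k = head k then -1 else 0)))
        < (fun _ => (0:ℝ)) k := by
      simp [if_neg (hloop k)]
      exact hw k
    calc ∑ k', ((if head k = head k' then (-w k') else 0) *
        ((if tail k = tail k' then (1:ℝ) else 0) + (if tail k = head k' then -1 else 0)))
        < ∑ _k' : Fin L, (0:ℝ) :=
          Finset.sum_lt_sum hterm ⟨k, Finset.mem_univ k, hk⟩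
      _ = 0 := by simp
  -- permute the root to the last position
  set e : Equiv.Perm (Fin (m+1)) := Equiv.swap r (Fin.last m) with he
  set M₀ : Matrix (Fin (m+1)) (Fin (m+1)) ℝ := G.submatrix e e with hM₀
  have hdiag₀ : ∀ i, 0 ≤ M₀ i i := fun i => hdiagG (e i)
  have hoff₀ : ∀ i j, i ≠ j → M₀ i j ≤ 0 := fun i j hij =>
    hoffG (e i) (e j) (fun h => hij (e.injective h))
  have hrow₀ : ∀ i, ∑ j, M₀ i j = 0 := by
    intro i
    have : ∑ j, M₀ i j = ∑ j, G (e i) j := Equiv.sum_comp e (fun j => G (e i) j)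
    rw [this, hrowG]
  have hconn₀ : ∀ i, Relation.ReflTransGen (fun a b => M₀ b a ≠ 0 ∧ b ≠ a) (Fin.last m) i := by
    intro i
    have hlift : Relation.ReflTransGen (fun a b => M₀ b a ≠ 0 ∧ b ≠ a) (e.symm r) (e.symm (e i)) :=
      Relation.ReflTransGen.lift (r := fun a b => ∃ k, tail k = a ∧ head k = b)
      (p := fun a b => M₀ b a ≠ 0 ∧ b ≠ a) (⇑e.symm) ?_ _ _ (hr (e i))
    · have h1 : e.symm r = Fin.last m := by
        rw [he]
        simp [Equiv.symm_swap, Equiv.swap_apply_left]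
      have h2 : e.symm (e i) = i := e.symm_apply_apply i
      rw [h1, h2] at hlift
      exact hlift
    · rintro a b ⟨k, hka, hkb⟩
      show M₀ (e.symm b) (e.symm a) ≠ 0 ∧ e.symm b ≠ e.symm a
      constructor
      · have : M₀ (e.symm b) (e.symm a) = G b a := by
          rw [hM₀, Matrix.submatrix_apply, e.apply_symm_apply, e.apply_symm_apply]
        rw [this, ← hka, ← hkb]
        exact (hedge k).ne
      · intro hh
        have : b = a := by
          have := congrArg e hh
          rwa [e.apply_symm_apply, e.apply_symm_apply] at this
        rw [← hka, ← hkb] at this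
        exact hloop k this.symm
  -- key facts for the permuted matrix transfer to G
  have hcharM₀ : (M₀.map (algebraMap ℝ ℂ)).charpoly = (G.map (algebraMap ℝ ℂ)).charpoly := by
    have h1 : M₀.map (algebraMap ℝ ℂ) = (G.map (algebraMap ℝ ℂ)).submatrix e e := by
      ext i j
      simp [hM₀, Matrix.submatrix_apply, Matrix.map_apply]
    have h2 : (G.map (algebraMap ℝ ℂ)).submatrix e e
        = Matrix.reindex e.symm e.symm (G.map (algebraMap ℝ ℂ)) := by
      rfl
    rw [h1, h2, Matrix.charpoly_reindex]
  have hmultG : ((G.map (algebraMap ℝ ℂ)).charpoly).rootMultiplicity 0 = 1 := by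
    rw [← hcharM₀]
    exact K4 M₀ hoff₀ hrow₀ hconn₀
  have hrootsG : ∀ μ : ℂ, ((G.map (algebraMap ℝ ℂ)).charpoly).IsRoot μ → μ ≠ 0 → 0 < μ.re := by
    rw [← hcharM₀]
    exact K3 M₀ hdiag₀ hoff₀ hrow₀
  -- relate edge Laplacian charpoly to graph Laplacian charpoly
  have hmap : ((E.transpose * Ew).map (algebraMap ℝ ℂ))
      = (E.transpose.map (algebraMap ℝ ℂ)) * (Ew.map (algebraMap ℝ ℂ)) := by
    exact Matrix.map_mul
  have hmapG : (G.map (algebraMap ℝ ℂ))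
      = (Ew.map (algebraMap ℝ ℂ)) * (E.transpose.map (algebraMap ℝ ℂ)) := by
    rw [hG]; exact Matrix.map_mul
  have hswap := charpoly_swap (Ew.map (algebraMap ℝ ℂ)) (E.transpose.map (algebraMap ℝ ℂ))
  rw [← hmap, ← hmapG] at hswap
  -- hswap : X ^ (m+1) * LeC.charpoly = X ^ L * GC.charpoly
  constructor
  · have hmul := congrArg (fun p => p.rootMultiplicity 0) hswap
    rw [Polynomial.rootMultiplicity_mul (mul_ne_zero (pow_ne_zero _ Polynomial.X_ne_zero)
        ((E.transpose * Ew).map (algebraMap ℝ ℂ)).charpoly_monic.ne_zero),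
      Polynomial.rootMultiplicity_mul (mul_ne_zero (pow_ne_zero _ Polynomial.X_ne_zero)
        (G.map (algebraMap ℝ ℂ)).charpoly_monic.ne_zero)] at hmul
    have hXpow : ∀ n : ℕ, rootMultiplicity (0:ℂ) ((X : ℂ[X]) ^ n) = n := by
      intro n
      rw [show (X : ℂ[X]) ^ n = (X - C 0) ^ n by simp]
      exact Polynomial.rootMultiplicity_X_sub_C_pow 0 n
    rw [hXpow, hXpow, hmultG] at hmul
    omega
  · intro μ hroot hμ
    refine hrootsG μ ?_ hμ
    have := congrArg (fun p => Polynomial.eval μ p) hswap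
    simp only [Polynomial.eval_mul, Polynomial.eval_pow, Polynomial.eval_X] at this
    rw [hroot] at this
    simp only [mul_zero] at this
    rcases mul_eq_zero.mp this.symm with h | h
    · exact absurd (pow_eq_zero_iff'.mp h).1 hμ
    · exact h
end

section
/- Let G be quasi-strongly connected with edge Laplacian L_e, and let θ_e be a matrix whose columns form an orthonormal basis of the null space of E. Then with S_e = [R^T θ_e], the similarity transform S_e^{-1} L_e S_e is block upper triangular with top-left block the essential edge Laplacian L̂_e = E_T^T E_⊙^w R^T ∈ R^{(N−1)×(N−1)} and bottom rows zero; consequently the spectrum of L_e equals the spectrum of L̂_e together with L−N+1 zeros. -/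
open Matrix Polynomial

lemma charpoly_eq_of_comm {n : Type*} [Fintype n] [DecidableEq n]
    (A M S : Matrix n n ℝ) (hS : IsUnit S.det) (h : A * S = S * M) :
    A.charpoly = M.charpoly := by
  have hQ : IsUnit ((S.map (C : ℝ →+* ℝ[X])).det) := by
    rw [← RingHom.mapMatrix_apply, ← RingHom.map_det]
    exact hS.map (C : ℝ →+* ℝ[X])
  have key : charmatrix A * S.map (C : ℝ →+* ℝ[X]) = S.map (C : ℝ →+* ℝ[X]) * charmatrix M := by
    have hmap : A.map (C : ℝ →+* ℝ[X]) * S.map C = S.map C * M.map C := by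
      rw [← Matrix.map_mul, ← Matrix.map_mul, h]
    simp only [charmatrix, RingHom.mapMatrix_apply, sub_mul, mul_sub, hmap]
    congr 1
    rw [scalar_commute]
    exact fun r => Commute.all _ _
  have hd := congrArg Matrix.det key
  rw [det_mul, det_mul, mul_comm (charmatrix A).det] at hd
  exact hQ.mul_left_cancel hd

/-- Let `G` be quasi-strongly connected with edge Laplacian `L_e = Eᵀ E⊙ʷ`,
where `E = E_T R` with `R = [I  T(G)]` (edges indexed by `Fin m ⊕ Fin k`, `m = N−1` tree
edges, `k = L−N+1` co-tree edges), `E_T` of full column rank and `R` of full row rank, and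
let `θ_e` have orthonormal columns forming a basis of the null space of `E`. Then with
`S_e = [Rᵀ  θ_e]`, `S_e` is invertible, `S_e⁻¹ L_e S_e` is block upper triangular with
top-left block the essential edge Laplacian `L̂_e = E_Tᵀ E⊙ʷ Rᵀ` and zero bottom rows;
consequently the characteristic polynomial of `L_e` is that of `L̂_e` times `X^{L−N+1}`. -/
theorem essential_edge_laplacian_similarity
    (N m k : ℕ)
    (ET : Matrix (Fin N) (Fin m) ℝ) (T : Matrix (Fin m) (Fin k) ℝ)
    (Ew : Matrix (Fin N) (Fin m ⊕ Fin k) ℝ)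
    (θ : Matrix (Fin m ⊕ Fin k) (Fin k) ℝ)
    (hET : IsUnit (ET.transpose * ET).det)
    (R : Matrix (Fin m) (Fin m ⊕ Fin k) ℝ) (hR : R = Matrix.fromCols 1 T)
    (E : Matrix (Fin N) (Fin m ⊕ Fin k) ℝ) (hE : E = ET * R)
    (hθ1 : E * θ = 0) (hθ2 : θ.transpose * θ = 1)
    (S : Matrix (Fin m ⊕ Fin k) (Fin m ⊕ Fin k) ℝ)
    (hS : S = Matrix.fromCols R.transpose θ) :
    IsUnit S.det ∧
    S⁻¹ * (E.transpose * Ew) * S =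
      Matrix.fromBlocks (ET.transpose * Ew * R.transpose) (ET.transpose * Ew * θ) 0 0 ∧
    (E.transpose * Ew).charpoly =
      (ET.transpose * Ew * R.transpose).charpoly * Polynomial.X ^ k := by
  -- R θ = 0
  have hRθ : R * θ = 0 := by
    have h1 : ET.transpose * (E * θ) = 0 := by rw [hθ1, Matrix.mul_zero]
    rw [hE] at h1
    calc R * θ = (ET.transpose * ET)⁻¹ * (ET.transpose * ET) * (R * θ) := by
          rw [Matrix.nonsing_inv_mul _ hET, Matrix.one_mul]
      _ = (ET.transpose * ET)⁻¹ * (ET.transpose * (ET * R * θ)) := by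
          simp only [Matrix.mul_assoc]
      _ = 0 := by rw [h1, Matrix.mul_zero]
  -- R Rᵀ pos def
  have hRR : R * R.transpose = 1 + T * T.transpose := by
    rw [hR, transpose_fromCols, fromCols_mul_fromRows, transpose_one, Matrix.one_mul]
  have hTTt : (T * T.transpose).PosSemidef := by
    have := Matrix.posSemidef_self_mul_conjTranspose T
    simpa [Matrix.conjTranspose_eq_transpose_of_trivial] using this
  have hRRpd : (R * R.transpose).PosDef := by
    rw [hRR]
    exact Matrix.PosDef.add_posSemidef Matrix.PosDef.one hTTt
  have hRRdet : IsUnit (R * R.transpose).det := hRRpd.det_pos.ne'.isUnit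
  -- left inverse of S
  have hθtRt : θ.transpose * R.transpose = 0 := by
    rw [← Matrix.transpose_mul, hRθ, Matrix.transpose_zero]
  have hleft : Matrix.fromRows ((R * R.transpose)⁻¹ * R) θ.transpose * S = 1 := by
    rw [hS, fromRows_mul_fromCols, Matrix.mul_assoc, Matrix.mul_assoc,
        Matrix.nonsing_inv_mul _ hRRdet, hRθ, Matrix.mul_zero, hθtRt, hθ2, fromBlocks_one]
  have hSdet : IsUnit S.det := Matrix.isUnit_det_of_left_inverse hleft
  -- key commutation
  have hkey : (E.transpose * Ew) * S =
      S * Matrix.fromBlocks (ET.transpose * Ew * R.transpose) (ET.transpose * Ew * θ) 0 0 := by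
    rw [hS, fromCols_mul_fromBlocks, Matrix.mul_fromCols]
    rw [hE, Matrix.transpose_mul]
    simp only [Matrix.zero_mul, add_zero, Matrix.mul_zero, Matrix.mul_assoc]
  have hmid : S⁻¹ * (E.transpose * Ew) * S =
      Matrix.fromBlocks (ET.transpose * Ew * R.transpose) (ET.transpose * Ew * θ) 0 0 := by
    rw [Matrix.mul_assoc, hkey, ← Matrix.mul_assoc, Matrix.nonsing_inv_mul _ hSdet, Matrix.one_mul]
  refine ⟨hSdet, hmid, ?_⟩
  have hcp := charpoly_eq_of_comm (E.transpose * Ew)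
      (Matrix.fromBlocks (ET.transpose * Ew * R.transpose) (ET.transpose * Ew * θ) 0 (0 : Matrix (Fin k) (Fin k) ℝ)) S hSdet hkey
  rw [hcp, Matrix.charpoly_fromBlocks_zero₂₁]
  congr 1
  -- charpoly of 0 = X^k
  rw [Matrix.charpoly]
  have : charmatrix (0 : Matrix (Fin k) (Fin k) ℝ) = Matrix.diagonal (fun _ => (X : ℝ[X])) := by
    ext i j
    by_cases h : i = j <;> simp [charmatrix_apply, Matrix.diagonal, h]
  rw [this, Matrix.det_diagonal]
  simp
end

section
/- Define q_l(x) = e^{q_u(ln x)} for x > 0, q_l(0) = 0, and q_l(x) = −e^{q_u(ln(−x))} for x < 0, where q_u(y) = δ_u(⌊y/δ_u⌋ + 1/2). Then |q_l(x) − x| ≤ (e^{δ_u} − 1)|x| for all x ∈ R; in particular q_l is a logarithmic quantizer with δ_l = e^{δ_u} − 1. -/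
lemma aux_exp_close (δu : ℝ) (hδ : 0 < δu) (d : ℝ) (hd : |d| ≤ δu / 2) :
    |Real.exp d - 1| ≤ Real.exp δu - 1 := by
  have h1 : d ≤ δu := by nlinarith [abs_le.mp hd]
  have h2 : -δu ≤ d := by nlinarith [abs_le.mp hd]
  rcases abs_cases (Real.exp d - 1) with ⟨he, _⟩ | ⟨he, _⟩
  · rw [he]
    have := Real.exp_le_exp.mpr h1
    linarith
  · rw [he]
    -- 1 - exp d ≤ exp δu - 1 since exp d ≥ exp (-δu) and exp δu + exp (-δu) ≥ 2
    have hged : Real.exp (-δu) ≤ Real.exp d := Real.exp_le_exp.mpr h2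
    have : Real.exp (-δu) = (Real.exp δu)⁻¹ := Real.exp_neg δu
    have hpos : 0 < Real.exp δu := Real.exp_pos δu
    have h2le : 2 ≤ Real.exp δu + (Real.exp δu)⁻¹ := by
      have hc := mul_inv_cancel₀ hpos.ne'
      nlinarith [sq_nonneg (Real.exp δu - 1), inv_pos.mpr hpos]
    linarith [this ▸ hged]

lemma aux_pos (δu : ℝ) (hδ : 0 < δu)
    (qu : ℝ → ℝ) (hqu : qu = fun y => δu * ((⌊y / δu⌋ : ℝ) + 1 / 2))
    (x : ℝ) (hx : 0 < x) :
    |Real.exp (qu (Real.log x)) - x| ≤ (Real.exp δu - 1) * x := by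
  set y := Real.log x
  have hq : |qu y - y| ≤ δu / 2 := by
    subst hqu
    simp only
    have h1 := mul_le_mul_of_nonneg_left (Int.floor_le (y / δu)) hδ.le
    have h2 := mul_lt_mul_of_pos_left (Int.lt_floor_add_one (y / δu)) hδ
    have hy : δu * (y / δu) = y := by field_simp
    rw [abs_le]
    constructor <;> nlinarith
  have hx' : Real.exp y = x := Real.exp_log hx
  have : Real.exp (qu y) = x * Real.exp (qu y - y) := by
    rw [← hx', ← Real.exp_add]; ring_nf
  rw [this]
  have : x * Real.exp (qu y - y) - x = x * (Real.exp (qu y - y) - 1) := by ring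
  rw [this, abs_mul, abs_of_pos hx, mul_comm]
  exact mul_le_mul_of_nonneg_right (aux_exp_close δu hδ _ hq) hx.le

/-- With `q_u(y) = δ_u(⌊y/δ_u⌋ + 1/2)`, define the odd map
`q_l(x) = e^{q_u(ln x)}` for `x > 0`, `q_l(0) = 0`, `q_l(x) = −e^{q_u(ln(−x))}` for `x < 0`.
Then `|q_l(x) − x| ≤ (e^{δ_u} − 1)|x|` for all `x ∈ ℝ`; in particular `q_l` is a logarithmic
quantizer with `δ_l = e^{δ_u} − 1`. -/
theorem exp_floor_quantizer_is_logarithmic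
    (δu : ℝ) (hδ : 0 < δu)
    (qu : ℝ → ℝ) (hqu : qu = fun y => δu * ((⌊y / δu⌋ : ℝ) + 1 / 2))
    (ql : ℝ → ℝ)
    (hql : ql = fun x =>
      if 0 < x then Real.exp (qu (Real.log x))
      else if x = 0 then 0
      else -Real.exp (qu (Real.log (-x)))) :
    ∀ x : ℝ, |ql x - x| ≤ (Real.exp δu - 1) * |x| := by
  intro x
  subst hql
  rcases lt_trichotomy x 0 with hx | hx | hx
  · simp only [not_lt.mpr hx.le, if_neg, hx.ne, if_false]
    have h := aux_pos δu hδ qu hqu (-x) (by linarith)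
    rw [abs_of_neg hx]
    calc |-Real.exp (qu (Real.log (-x))) - x| = |Real.exp (qu (Real.log (-x))) - (-x)| := by
          rw [← abs_neg]; ring_nf
      _ ≤ (Real.exp δu - 1) * (-x) := h
  · simp [hx]
  · simp only [if_pos hx]
    rw [abs_of_pos hx]
    exact aux_pos δu hδ qu hqu x hx
end
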